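/- arXiv:2308.07742 — 2 statements merged into one kernel-verified Lean document; each statement's English description precedes it below -/
import Mathlib

section
/- Let d ≥ 1, let W : ℝ^d → ℝ^d be continuously differentiable with compact support, and let Δ ⊂ ℝ^d be a bounded measurable set. Then the map t ↦ vol(F_t(Δ)) (the Lebesgue measure of the image F_t(Δ)) is differentiable at t = 0 and d/dt|_{t=0} vol(F_t(Δ)) = ∫_Δ div W(x) dx. -/
/-!
For small `t` the map `x ↦ x + t • W x` is injective (`W` is Lipschitz) and its Jacobian
determinant `det (1 + t • DW x)` is positive (`DW` is bounded), so the change of variables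
formula gives `vol (F_t Δ) = ∫_Δ det (1 + t • DW x) dx`. Since
`det (1 + t • A) = 1 + t tr A + O(t²)` and `det` is smooth, the integrand can be differentiated
under the integral sign at `t = 0`.
-/

open MeasureTheory

/-- Jacobian matrix of a vector field on `ℝ^d`: `(jac v x) i j = ∂ v_i / ∂ x_j`. -/
noncomputable def jac {d : ℕ} (v : EuclideanSpace ℝ (Fin d) → EuclideanSpace ℝ (Fin d))
    (x : EuclideanSpace ℝ (Fin d)) : Matrix (Fin d) (Fin d) ℝ :=
  Matrix.of fun i j => fderiv ℝ v x (EuclideanSpace.single j (1 : ℝ)) i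

/-- Divergence of a vector field: the trace of its Jacobian. -/
noncomputable def divg {d : ℕ} (v : EuclideanSpace ℝ (Fin d) → EuclideanSpace ℝ (Fin d))
    (x : EuclideanSpace ℝ (Fin d)) : ℝ :=
  Matrix.trace (jac v x)

open Filter Topology Set Function

namespace ContinuousLinearMap

section Determinant

variable {𝕜 : Type*} [NontriviallyNormedField 𝕜]
  {E : Type*} [NormedAddCommGroup E] [NormedSpace 𝕜 E] [FiniteDimensional 𝕜 E]

theorem contDiff_det [CompleteSpace 𝕜] {n : WithTop ℕ∞} :
    ContDiff 𝕜 n fun f : E →L[𝕜] E => f.det := by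
  classical
  let b := Module.finBasis 𝕜 E
  let c i := LinearMap.toContinuousLinearMap (b.coord i)
  have hleibniz : (fun f : E →L[𝕜] E => f.det) = fun f =>
      ∑ σ : Equiv.Perm (Fin (Module.finrank 𝕜 E)), (Equiv.Perm.sign σ : 𝕜) *
        ∏ i, c (σ i) (f (b i)) := by
    funext f
    rw [det, ← LinearMap.det_toMatrix b, Matrix.det_apply]
    simp [c, LinearMap.toMatrix_apply, Units.smul_def]
  rw [hleibniz]
  fun_prop

theorem hasDerivAt_det_add_smul [CompleteSpace 𝕜] (B A : E →L[𝕜] E) (t : 𝕜) :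
    HasDerivAt (fun s : 𝕜 => (B + s • A).det)
      (fderiv 𝕜 (fun f : E →L[𝕜] E => f.det) (B + t • A) A) t := by
  have hline : HasDerivAt (fun s : 𝕜 => B + s • A) A t := by
    simpa using ((hasDerivAt_id t).smul_const A).const_add B
  exact ((contDiff_det.differentiable one_ne_zero _).hasFDerivAt).comp_hasDerivAt t hline

theorem hasDerivAt_det_one_add_smul (A : E →L[𝕜] E) :
    HasDerivAt (fun t : 𝕜 => (1 + t • A).det) (LinearMap.trace 𝕜 E A) 0 := by
  classical
  let b := Module.finBasis 𝕜 E
  set M := LinearMap.toMatrix b b A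
  set P := (Matrix.det (1 + (Polynomial.X : Polynomial 𝕜) • M.map Polynomial.C)).divX.divX
  have hexpand : (fun t : 𝕜 => (1 + t • A).det) =
      fun t => 1 + M.trace * t + P.eval t * t ^ 2 := by
    funext t
    rw [← Matrix.det_one_add_smul, det, ← LinearMap.det_toMatrix b]
    simp [M, map_add, map_smul]
  rw [hexpand, LinearMap.trace_eq_matrix_trace 𝕜 b]
  have hquad : HasDerivAt (fun t => P.eval t * t ^ 2) 0 0 :=
    ((P.hasDerivAt 0).mul (hasDerivAt_pow 2 0)).congr_deriv (by simp)
  exact ((((hasDerivAt_id 0).const_mul M.trace).const_add 1).add hquad).congr_deriv (by simp [M])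

theorem fderiv_det_one [CompleteSpace 𝕜] (A : E →L[𝕜] E) :
    fderiv 𝕜 (fun f : E →L[𝕜] E => f.det) 1 A = LinearMap.trace 𝕜 E A := by
  have h := (hasDerivAt_det_add_smul 1 A 0).unique (hasDerivAt_det_one_add_smul A)
  rwa [zero_smul, add_zero] at h

end Determinant

theorem eventually_pos_det_one_add_smul {E : Type*} [NormedAddCommGroup E]
    [NormedSpace ℝ E] [FiniteDimensional ℝ E] (R : ℝ) :
    ∀ᶠ t in 𝓝 (0 : ℝ), ∀ A : E →L[ℝ] E, ‖A‖ ≤ R → 0 < (1 + t • A).det := by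
  have hnear_one : ∀ᶠ B in 𝓝 (1 : E →L[ℝ] E), 0 < B.det :=
    (continuous_det.tendsto 1).eventually (lt_mem_nhds (by simp [det]))
  obtain ⟨ε, hε, hball⟩ := Metric.eventually_nhds_iff.1 hnear_one
  have hsmall : ∀ᶠ t in 𝓝 (0 : ℝ), ‖t‖ * R < ε :=
    ((continuous_norm.mul continuous_const).tendsto' (0 : ℝ) 0 (by simp)).eventually
      (gt_mem_nhds hε)
  filter_upwards [hsmall] with t ht A hA
  apply hball
  rw [dist_eq_norm, add_sub_cancel_left, norm_smul]
  exact (mul_le_mul_of_nonneg_left hA (norm_nonneg t)).trans_lt ht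

end ContinuousLinearMap

theorem LipschitzWith.eventually_injective_add_smul {𝕜 E : Type*} [NormedField 𝕜]
    [NormedAddCommGroup E] [NormedSpace 𝕜 E] {K : NNReal} {W : E → E} (hW : LipschitzWith K W) :
    ∀ᶠ t in 𝓝 (0 : 𝕜), Injective fun x => x + t • W x := by
  have hsmall : ∀ᶠ t in 𝓝 (0 : 𝕜), ‖t‖₊ * K < 1 :=
    ((continuous_nnnorm.mul continuous_const).tendsto' (0 : 𝕜) 0 (by simp)).eventually
      (gt_mem_nhds one_pos)
  filter_upwards [hsmall] with t ht
  exact (AntilipschitzWith.id.add_lipschitzWith ((lipschitzWith_smul t).comp hW)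
    (by simpa using ht)).injective

theorem MeasureTheory.measureReal_image_eq_integral_det {E : Type*} [NormedAddCommGroup E]
    [NormedSpace ℝ E] [FiniteDimensional ℝ E] [MeasurableSpace E] [BorelSpace E]
    (μ : Measure E) [μ.IsAddHaarMeasure] {s : Set E} {f : E → E} {f' : E → E →L[ℝ] E}
    (hs : MeasurableSet s) (hf' : ∀ x ∈ s, HasFDerivWithinAt f (f' x) s x) (hf : InjOn f s)
    (hdet : ∀ x ∈ s, 0 ≤ (f' x).det) :
    μ.real (f '' s) = ∫ x in s, (f' x).det ∂μ := by
  have h := integral_image_eq_integral_abs_det_fderiv_smul μ hs hf' hf fun _ => (1 : ℝ)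
  simp only [integral_const, smul_eq_mul, mul_one, measureReal_restrict_apply_univ] at h
  rw [h]
  exact setIntegral_congr_fun hs fun x hx => abs_of_nonneg (hdet x hx)

theorem hasDerivAt_integral_det_one_add_smul {𝕜 : Type*} [RCLike 𝕜] {E : Type*}
    [NormedAddCommGroup E] [NormedSpace 𝕜 E] [FiniteDimensional 𝕜 E] {α : Type*}
    [MeasurableSpace α] (ν : Measure α) [IsFiniteMeasure ν] {A : α → E →L[𝕜] E}
    (hA : AEStronglyMeasurable A ν) {R : ℝ} (hR : ∀ x, ‖A x‖ ≤ R) :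
    HasDerivAt (fun t : 𝕜 => ∫ x, (1 + t • A x).det ∂ν)
      (∫ x, LinearMap.trace 𝕜 E (A x) ∂ν) 0 := by
  set D := fderiv 𝕜 fun f : E →L[𝕜] E => f.det
  have hD : Continuous D := ContinuousLinearMap.contDiff_det.continuous_fderiv one_ne_zero
  have : ProperSpace (E →L[𝕜] E) := FiniteDimensional.proper_rclike 𝕜 _
  obtain ⟨K, hK⟩ := (isCompact_closedBall (1 : E →L[𝕜] E) R).exists_bound_of_continuousOn
    (f := D) hD.continuousOn
  have hbound : ∀ x, ∀ t ∈ Metric.ball (0 : 𝕜) 1, ‖D (1 + t • A x) (A x)‖ ≤ K * R := by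
    intro x t ht
    have hmem : 1 + t • A x ∈ Metric.closedBall 1 R := by
      rw [Metric.mem_closedBall, dist_eq_norm, add_sub_cancel_left, norm_smul]
      rw [mem_ball_zero_iff] at ht
      exact (mul_le_of_le_one_left (norm_nonneg _) ht.le).trans (hR x)
    calc ‖D (1 + t • A x) (A x)‖ ≤ ‖D (1 + t • A x)‖ * ‖A x‖ :=
          ContinuousLinearMap.le_opNorm _ _
      _ ≤ K * R :=
          mul_le_mul (hK _ hmem) (hR x) (norm_nonneg _) ((norm_nonneg _).trans (hK _ hmem))
  have hdominated := hasDerivAt_integral_of_dominated_loc_of_deriv_le (μ := ν)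
    (Metric.ball_mem_nhds 0 one_pos)
    (Eventually.of_forall fun t =>
      ContinuousLinearMap.continuous_det.comp_aestronglyMeasurable ((hA.const_smul t).const_add 1))
    (by simp)
    (by simpa using (D 1).continuous.comp_aestronglyMeasurable hA)
    (Eventually.of_forall hbound) (integrable_const (K * R))
    (Eventually.of_forall fun x t _ => ContinuousLinearMap.hasDerivAt_det_add_smul 1 (A x) t)
  simpa [D, ContinuousLinearMap.fderiv_det_one] using hdominated.2

theorem divg_eq_trace_fderiv {d : ℕ} (v : EuclideanSpace ℝ (Fin d) → EuclideanSpace ℝ (Fin d))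
    (x : EuclideanSpace ℝ (Fin d)) :
    divg v x = LinearMap.trace ℝ (EuclideanSpace ℝ (Fin d)) (fderiv ℝ v x) := by
  rw [LinearMap.trace_eq_matrix_trace ℝ (EuclideanSpace.basisFun (Fin d) ℝ).toBasis, divg, jac]
  rfl

theorem volume_shape_derivative_general {d : ℕ}
    (W : EuclideanSpace ℝ (Fin d) → EuclideanSpace ℝ (Fin d))
    (hW : ContDiff ℝ 1 W) (hWc : HasCompactSupport W)
    (Δ : Set (EuclideanSpace ℝ (Fin d))) (hΔm : MeasurableSet Δ)
    (hΔb : Bornology.IsBounded Δ) :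
    HasDerivAt (fun t => (volume ((fun x => x + t • W x) '' Δ)).toReal)
      (∫ x in Δ, divg W x) (0 : ℝ) := by
  have hDW : Continuous (fderiv ℝ W) := hW.continuous_fderiv one_ne_zero
  obtain ⟨R, hR⟩ := (hWc.fderiv ℝ).exists_bound_of_continuous hDW
  have : IsFiniteMeasure (volume.restrict Δ) :=
    isFiniteMeasure_restrict.2 hΔb.measure_lt_top.ne
  have hderiv :=
    hasDerivAt_integral_det_one_add_smul (volume.restrict Δ) hDW.aestronglyMeasurable hR
  simp_rw [← divg_eq_trace_fderiv] at hderiv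
  obtain ⟨L, hL⟩ := hW.lipschitzWith_of_hasCompactSupport hWc one_ne_zero
  refine hderiv.congr_of_eventuallyEq ?_
  filter_upwards
    [ContinuousLinearMap.eventually_pos_det_one_add_smul (E := EuclideanSpace ℝ (Fin d)) R,
      hL.eventually_injective_add_smul] with t hpos hinj
  refine measureReal_image_eq_integral_det volume hΔm (fun x _ => ?_) hinj.injOn
    fun x _ => (hpos _ (hR x)).le
  exact ((hasFDerivAt_id x).add
    ((hW.differentiable one_ne_zero x).hasFDerivAt.const_smul t)).hasFDerivWithinAt

/-- Shape derivative of the volume: `d/dt|₀ vol(F_t(Δ)) = ∫_Δ div W dx`. -/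
theorem volume_shape_derivative {d : ℕ} (hd : 1 ≤ d)
    (W : EuclideanSpace ℝ (Fin d) → EuclideanSpace ℝ (Fin d))
    (hW : ContDiff ℝ 1 W) (hWc : HasCompactSupport W)
    (Δ : Set (EuclideanSpace ℝ (Fin d))) (hΔm : MeasurableSet Δ)
    (hΔb : Bornology.IsBounded Δ) :
    HasDerivAt (fun t => (volume ((fun x => x + t • W x) '' Δ)).toReal)
      (∫ x in Δ, divg W x) (0 : ℝ) :=
  volume_shape_derivative_general W hW hWc Δ hΔm hΔb
end

section
/- Let d ≥ 1, let W : ℝ^d → ℝ^d be continuously differentiable with compact support, and let Δ ⊂ ℝ^d be a bounded measurable set. Then the ℝ^d-valued map t ↦ ∫_{F_t(Δ)} y dy is differentiable at t = 0 and d/dt|_{t=0} ∫_{F_t(Δ)} y dy = ∫_Δ ( W(x) + div W(x) · x ) dx. -/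
/-!
For small `t` the map `F_t = id + t • W` is injective on `Δ` (a Lipschitz perturbation of
the identity) and its Jacobian determinant `det (1 + t • DW)` is positive, so the change of
variables formula gives `∫_{F_t(Δ)} y dy = ∫_Δ det (1 + t • DW x) • (x + t • W x) dx`.
By Jacobi's formula `d/dt det (A + t • M) = trace (adj (A + t • M) * M)` the integrand has a
derivative that is continuous in `(t, x)`, hence bounded on `[-ε, ε] × closure Δ`, so one may
differentiate under the integral sign; at `t = 0` the derivative of the integrand is
`W x + trace (DW x) • x`.
-/

open MeasureTheory

open Filter Topology Set

namespace Matrix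

variable {n 𝕜 : Type*} [Fintype n] [DecidableEq n] [NontriviallyNormedField 𝕜]

open Polynomial in
theorem hasDerivAt_det_one_add_smul (M : Matrix n n 𝕜) :
    HasDerivAt (fun t : 𝕜 => (1 + t • M).det) M.trace 0 := by
  have hpoly : (fun t : 𝕜 => (1 + t • M).det)
      = fun t => (det (1 + (X : 𝕜[X]) • M.map C)).eval t := by
    funext t
    simp [eval_det, ← smul_eq_mul_diagonal]
  rw [hpoly, ← derivative_det_one_add_X_smul]
  exact Polynomial.hasDerivAt _ 0

theorem hasDerivAt_det_add_smul {A M : Matrix n n 𝕜} {t₀ : 𝕜}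
    (hA : IsUnit (A + t₀ • M).det) :
    HasDerivAt (fun t : 𝕜 => (A + t • M).det) ((A + t₀ • M).adjugate * M).trace t₀ := by
  set B := A + t₀ • M
  have hfactor : ∀ t : 𝕜, A + t • M = B * (1 + (t - t₀) • (B⁻¹ * M)) := by
    intro t
    rw [Matrix.mul_add, mul_one, Matrix.mul_smul, ← Matrix.mul_assoc, mul_nonsing_inv B hA,
      one_mul, sub_smul]
    simp only [B]
    abel
  have hadj : B.det * (B⁻¹ * M).trace = (B.adjugate * M).trace := by
    rw [← smul_eq_mul, ← trace_smul, ← Matrix.smul_mul, inv_def, smul_smul,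
      Ring.mul_inverse_cancel _ hA, one_smul]
  simp_rw [hfactor, det_mul, ← hadj]
  have h0 := (hasDerivAt_det_one_add_smul (B⁻¹ * M)).const_mul B.det
  rw [← sub_self t₀] at h0
  exact h0.comp_sub_const t₀ t₀

end Matrix

theorem eventually_forall_det_one_add_smul_pos {X n : Type*} [TopologicalSpace X] [Fintype n]
    [DecidableEq n] {J : X → Matrix n n ℝ} (hJ : Continuous J) {K : Set X}
    (hK : IsCompact K) :
    ∀ᶠ t in 𝓝 (0 : ℝ), ∀ x ∈ K, 0 < (1 + t • J x).det := by
  refine hK.eventually_forall_of_forall_eventually fun x _ => ?_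
  have hdet : Continuous fun p : ℝ × X => (1 + p.1 • J p.2).det :=
    (continuous_const.add (continuous_fst.smul (hJ.comp continuous_snd))).matrix_det
  exact (hdet.tendsto (0, x)).eventually (lt_mem_nhds (by simp))

theorem LipschitzOnWith.injOn_add_smul {E : Type*} [NormedAddCommGroup E] [NormedSpace ℝ E]
    {W : E → E} {s : Set E} {K : NNReal} {t : ℝ} (hW : LipschitzOnWith K W s)
    (ht : ‖t‖₊ * K < 1) : InjOn (fun x => x + t • W x) s :=
  injOn_iff_injective.2 <| ((AntilipschitzWith.subtype_coe s).add_lipschitzWith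
    ((lipschitzWith_smul t).comp hW.to_restrict) (by simpa using ht)).injective

theorem hasDerivAt_setIntegral_det_one_add_smul_smul {E n : Type*} [NormedAddCommGroup E]
    [NormedSpace ℝ E] [MeasurableSpace E] [BorelSpace E] [ProperSpace E] [Fintype n]
    [DecidableEq n] {J : E → Matrix n n ℝ} {W : E → E} (hJ : Continuous J) (hW : Continuous W)
    {s : Set E} (hsb : Bornology.IsBounded s) (μ : Measure E) [IsFiniteMeasureOnCompacts μ] :
    HasDerivAt (fun t : ℝ => ∫ x in s, (1 + t • J x).det • (x + t • W x) ∂μ)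
      (∫ x in s, (W x + (J x).trace • x) ∂μ) 0 := by
  obtain ⟨ε, hε, hpos⟩ : ∃ ε > 0, ∀ t ∈ Metric.ball (0 : ℝ) ε, ∀ x ∈ closure s,
      0 < (1 + t • J x).det :=
    Metric.eventually_nhds_iff_ball.1
      (eventually_forall_det_one_add_smul_pos hJ hsb.isCompact_closure)
  set F' : ℝ → E → E := fun t x =>
    (1 + t • J x).det • W x + ((1 + t • J x).adjugate * J x).trace • (x + t • W x)
  have hA : Continuous fun p : ℝ × E => 1 + p.1 • J p.2 :=
    continuous_const.add (continuous_fst.smul (hJ.comp continuous_snd))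
  have hF : Continuous fun p : ℝ × E => (1 + p.1 • J p.2).det • (p.2 + p.1 • W p.2) :=
    hA.matrix_det.smul (continuous_snd.add (continuous_fst.smul (hW.comp continuous_snd)))
  have hF' : Continuous fun p : ℝ × E => F' p.1 p.2 :=
    (hA.matrix_det.smul (hW.comp continuous_snd)).add
      ((hA.matrix_adjugate.mul (hJ.comp continuous_snd)).matrix_trace.smul
        (continuous_snd.add (continuous_fst.smul (hW.comp continuous_snd))))
  obtain ⟨C, hC⟩ := ((isCompact_closedBall (0 : ℝ) ε).prod
    hsb.isCompact_closure).exists_bound_of_continuousOn hF'.continuousOn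
  have hderiv : ∀ x ∈ closure s, ∀ t ∈ Metric.ball (0 : ℝ) ε,
      HasDerivAt (fun t : ℝ => (1 + t • J x).det • (x + t • W x)) (F' t x) t :=
    fun x hx t ht =>
    (Matrix.hasDerivAt_det_add_smul (hpos t ht x hx).ne'.isUnit).smul
      (((hasDerivAt_id t).smul_const (W x)).const_add x |>.congr_deriv (one_smul ℝ (W x)))
  have : IsFiniteMeasure (μ.restrict s) := isFiniteMeasure_restrict.2
    (measure_mono subset_closure |>.trans_lt hsb.isCompact_closure.measure_lt_top).ne
  have hs : ∀ᵐ x ∂μ.restrict s, x ∈ closure s :=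
    ae_restrict_of_ae_restrict_of_subset subset_closure
      (ae_restrict_mem isClosed_closure.measurableSet)
  have key := hasDerivAt_integral_of_dominated_loc_of_deriv_le (μ := μ.restrict s)
    (F' := F') (bound := fun _ => C) (Metric.ball_mem_nhds 0 hε)
    (.of_forall fun t => (hF.comp (Continuous.prodMk_right t)).aestronglyMeasurable)
    ((hF.comp (Continuous.prodMk_right 0)).continuousOn.integrableOn_compact
      hsb.isCompact_closure |>.mono_set subset_closure)
    (hF'.comp (Continuous.prodMk_right 0)).aestronglyMeasurable
    (hs.mono fun x hx t ht => hC (t, x) ⟨Metric.ball_subset_closedBall ht, hx⟩)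
    (integrable_const C) (hs.mono hderiv)
  simpa [F'] using key.2

section Euclidean

variable {d : ℕ}

local notation "𝔼" => EuclideanSpace ℝ (Fin d)

theorem jac_eq_toMatrix_fderiv (v : 𝔼 → 𝔼) (x : 𝔼) :
    jac v x = LinearMap.toMatrix (EuclideanSpace.basisFun (Fin d) ℝ).toBasis
      (EuclideanSpace.basisFun (Fin d) ℝ).toBasis (fderiv ℝ v x) := by
  ext i j
  simp [LinearMap.toMatrix_apply, jac]

theorem det_id_add_smul_fderiv (v : 𝔼 → 𝔼) (t : ℝ) (x : 𝔼) :
    (ContinuousLinearMap.id ℝ 𝔼 + t • fderiv ℝ v x).det = (1 + t • jac v x).det := by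
  rw [ContinuousLinearMap.det, jac_eq_toMatrix_fderiv,
    ← LinearMap.det_toMatrix (EuclideanSpace.basisFun (Fin d) ℝ).toBasis]
  simp only [ContinuousLinearMap.toLinearMap_add, ContinuousLinearMap.toLinearMap_smul,
    ContinuousLinearMap.coe_id, map_add, map_smul, LinearMap.toMatrix_id]

theorem continuous_jac {v : 𝔼 → 𝔼} (hv : Continuous (fderiv ℝ v)) : Continuous (jac v) :=
  continuous_matrix fun i j =>
    (EuclideanSpace.proj i).continuous.comp
      ((ContinuousLinearMap.apply ℝ 𝔼 (EuclideanSpace.single j (1 : ℝ))).continuous.comp hv)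

theorem setIntegral_image_add_smul {F : Type*} [NormedAddCommGroup F] [NormedSpace ℝ F]
    {v : 𝔼 → 𝔼} (hv : Differentiable ℝ v) {s : Set 𝔼} (hs : MeasurableSet s) {t : ℝ}
    (hinj : InjOn (fun x => x + t • v x) s) (hpos : ∀ x ∈ s, 0 < (1 + t • jac v x).det)
    (g : 𝔼 → F) :
    ∫ y in (fun x => x + t • v x) '' s, g y
      = ∫ x in s, (1 + t • jac v x).det • g (x + t • v x) := by
  have hderiv : ∀ x ∈ s, HasFDerivWithinAt (fun x => x + t • v x)
      (ContinuousLinearMap.id ℝ 𝔼 + t • fderiv ℝ v x) s x := fun x _ =>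
    ((hasFDerivAt_id x).add ((hv x).hasFDerivAt.const_smul t)).hasFDerivWithinAt
  rw [integral_image_eq_integral_abs_det_fderiv_smul volume hs hderiv hinj]
  refine setIntegral_congr_fun hs fun x hx => ?_
  rw [det_id_add_smul_fderiv, abs_of_pos (hpos x hx)]

end Euclidean

theorem first_moment_shape_derivative_general {d : ℕ}
    (W : EuclideanSpace ℝ (Fin d) → EuclideanSpace ℝ (Fin d))
    (hW : ContDiff ℝ 1 W)
    (Δ : Set (EuclideanSpace ℝ (Fin d))) (hΔm : MeasurableSet Δ)
    (hΔb : Bornology.IsBounded Δ) :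
    HasDerivAt (fun t : ℝ => ∫ y in (fun x => x + t • W x) '' Δ, y)
      (∫ x in Δ, (W x + divg W x • x)) (0 : ℝ) := by
  have hJ : Continuous (jac W) := continuous_jac (hW.continuous_fderiv one_ne_zero)
  obtain ⟨K, hK⟩ := hW.locallyLipschitz.locallyLipschitzOn.exists_lipschitzOnWith_of_compact
    hΔb.isCompact_closure
  have hsmall : ∀ᶠ t : ℝ in 𝓝 0, ‖t‖₊ * K < 1 :=
    (continuous_nnnorm.mul_const K).tendsto' 0 0 (by simp) |>.eventually (gt_mem_nhds one_pos)
  refine (hasDerivAt_setIntegral_det_one_add_smul_smul hJ hW.continuous hΔb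
    volume).congr_of_eventuallyEq ?_
  filter_upwards [hsmall, eventually_forall_det_one_add_smul_pos hJ hΔb.isCompact_closure]
    with t ht hpos
  exact setIntegral_image_add_smul (hW.differentiable one_ne_zero) hΔm
    ((hK.mono subset_closure).injOn_add_smul ht)
    (fun x hx => hpos x (subset_closure hx)) id

/-- Shape derivative of the first moment:
`d/dt|₀ ∫_{F_t(Δ)} y dy = ∫_Δ (W(x) + div W(x) • x) dx`. -/
theorem first_moment_shape_derivative {d : ℕ} (hd : 1 ≤ d)
    (W : EuclideanSpace ℝ (Fin d) → EuclideanSpace ℝ (Fin d))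
    (hW : ContDiff ℝ 1 W) (hWc : HasCompactSupport W)
    (Δ : Set (EuclideanSpace ℝ (Fin d))) (hΔm : MeasurableSet Δ)
    (hΔb : Bornology.IsBounded Δ) :
    HasDerivAt (fun t : ℝ => ∫ y in (fun x => x + t • W x) '' Δ, y)
      (∫ x in Δ, (W x + divg W x • x)) (0 : ℝ) :=
  first_moment_shape_derivative_general W hW Δ hΔm hΔb
end
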